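/- arXiv:2502.18833 — 2 statements merged into one kernel-verified Lean document; each statement's English description precedes it below -/
import Mathlib

section
/- Let L be the poset from the construction: E = ℕ × (ℕ ∪ {∞}), C_i = {i} × ℕ, F = ∏_{i∈ℕ} C_i, L = E ∪ (F × {0,1}) with order generated by (i,m) ≤ (i,n) ≤ (i,∞) for m ≤ n, and φ(i) ≤ (φ,0) ≤ (φ,1) for φ ∈ F, i ∈ ℕ. Then every element of L is either compact (way-below itself) or maximal in L. -/
/-- A subset is Scott open: an upper set inaccessible by directed suprema. -/
def ScottOpen {α : Type*} [Preorder α] (U : Set α) : Prop :=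
  IsUpperSet U ∧ ∀ d : Set α, d.Nonempty → DirectedOn (· ≤ ·) d →
    ∀ a : α, IsLUB d a → a ∈ U → (d ∩ U).Nonempty

/-- A subset is Scott closed: a lower set closed under directed suprema. -/
def ScottClosed {α : Type*} [Preorder α] (C : Set α) : Prop :=
  IsLowerSet C ∧ ∀ d : Set α, d ⊆ C → d.Nonempty → DirectedOn (· ≤ ·) d →
    ∀ a : α, IsLUB d a → a ∈ C

/-- A dcpo: every nonempty directed subset has a supremum. -/
def IsDcpo (α : Type*) [Preorder α] : Prop :=
  ∀ d : Set α, d.Nonempty → DirectedOn (· ≤ ·) d → ∃ a, IsLUB d a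

/-- The way-below relation. -/
def WayBelow {α : Type*} [Preorder α] (x y : α) : Prop :=
  ∀ d : Set α, d.Nonempty → DirectedOn (· ≤ ·) d → ∀ a : α, IsLUB d a → y ≤ a →
    ∃ z ∈ d, x ≤ z

/-- A compact element: one that is way-below itself. -/
def IsCompactElt {α : Type*} [Preorder α] (x : α) : Prop := WayBelow x x

/-- A continuous dcpo (domain). -/
def IsContinuousDcpo (α : Type*) [Preorder α] : Prop :=
  IsDcpo α ∧ ∀ x : α, DirectedOn (· ≤ ·) {y | WayBelow y x} ∧ IsLUB {y | WayBelow y x} x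

/-- An algebraic dcpo (algebraic domain). -/
def IsAlgebraicDcpo (α : Type*) [Preorder α] : Prop :=
  IsDcpo α ∧ ∀ x : α, DirectedOn (· ≤ ·) {k | IsCompactElt k ∧ k ≤ x} ∧
    IsLUB {k | IsCompactElt k ∧ k ≤ x} x

/-- An ideal domain: a continuous dcpo in which every element is compact or maximal. -/
def IsIdealDomain (α : Type*) [Preorder α] : Prop :=
  IsContinuousDcpo α ∧ ∀ x : α, IsCompactElt x ∨ IsMax x

/-- The Scott topology on a preorder. -/
def scottTop (α : Type*) [Preorder α] : TopologicalSpace α where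
  IsOpen := ScottOpen
  isOpen_univ := ⟨isUpperSet_univ, fun d hd _ _ _ _ => hd.imp fun x hx => ⟨hx, trivial⟩⟩
  isOpen_inter U V hU hV := by
    refine ⟨hU.1.inter hV.1, fun d hne hdir a ha haUV => ?_⟩
    obtain ⟨u, hud, huU⟩ := hU.2 d hne hdir a ha haUV.1
    obtain ⟨v, hvd, hvV⟩ := hV.2 d hne hdir a ha haUV.2
    obtain ⟨w, hwd, hw1, hw2⟩ := hdir u hud v hvd
    exact ⟨w, hwd, hU.1 hw1 huU, hV.1 hw2 hvV⟩
  isOpen_sUnion S hS := by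
    constructor
    · rintro a b hab ⟨U, hUS, haU⟩
      exact ⟨U, hUS, (hS U hUS).1 hab haU⟩
    · rintro d hne hdir a ha ⟨U, hUS, haU⟩
      obtain ⟨u, hud, huU⟩ := (hS U hUS).2 d hne hdir a ha haU
      exact ⟨u, hud, U, hUS, huU⟩

/-- The maximal point space of a preorder. -/
abbrev MaxSpace (α : Type*) [Preorder α] := {x : α // IsMax x}

/-- The maximal point space carries the relative Scott topology. -/
instance maxSpaceTop (α : Type*) [Preorder α] : TopologicalSpace (MaxSpace α) :=
  TopologicalSpace.induced Subtype.val (scottTop α)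
/-- The carrier of the poset `L`: `E = ℕ × (ℕ ∪ {∞})` together with `F × {0,1}`,
where an element `φ` of `F = ∏ᵢ Cᵢ` (with `Cᵢ = {i} × ℕ`) is encoded by the function
`ℕ → ℕ` of its second coordinates, i.e. `φ(i) = (i, φ i)`, and `{0,1}` by `Bool`. -/
structure LCarrier where
  toSum : (ℕ × ℕ∞) ⊕ ((ℕ → ℕ) × Bool)

/-- The order on `L` generated by `(i,m) ≤ (i,n) ≤ (i,∞)` for `m ≤ n` in `ℕ`,
and `φ(i) ≤ (φ,0) ≤ (φ,1)` for all `φ ∈ F`, `i ∈ ℕ`. -/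
def lle : LCarrier → LCarrier → Prop
  | ⟨.inl (i, m)⟩, ⟨.inl (j, n)⟩ => i = j ∧ m ≤ n
  | ⟨.inl (i, m)⟩, ⟨.inr (φ, _)⟩ => m ≤ (φ i : ℕ∞)
  | ⟨.inr (φ, b)⟩, ⟨.inr (ψ, c)⟩ => φ = ψ ∧ b ≤ c
  | ⟨.inr _⟩, ⟨.inl _⟩ => False

instance : PartialOrder LCarrier where
  le := lle
  lt a b := lle a b ∧ ¬ lle b a
  lt_iff_le_not_ge _ _ := Iff.rfl
  le_refl x := by rcases x with ⟨⟨i, m⟩ | ⟨φ, b⟩⟩ <;> exact ⟨rfl, le_refl _⟩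
  le_trans x y z h1 h2 := by
    rcases x with ⟨⟨i, m⟩ | ⟨φ, b⟩⟩ <;> rcases y with ⟨⟨j, n⟩ | ⟨ψ, c⟩⟩ <;>
      rcases z with ⟨⟨k, p⟩ | ⟨χ, d⟩⟩ <;>
      simp only [lle] at h1 h2 ⊢
    · exact ⟨h1.1.trans h2.1, h1.2.trans h2.2⟩
    · cases h1.1; exact h1.2.trans h2
    · cases h2.1; exact h1
    · exact ⟨h1.1.trans h2.1, h1.2.trans h2.2⟩
  le_antisymm x y h1 h2 := by
    rcases x with ⟨⟨i, m⟩ | ⟨φ, b⟩⟩ <;> rcases y with ⟨⟨j, n⟩ | ⟨ψ, c⟩⟩ <;>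
      simp only [lle] at h1 h2
    · cases h1.1
      exact congrArg _ (congrArg _ (Prod.ext rfl (le_antisymm h1.2 h2.2)))
    · cases h1.1
      exact congrArg _ (congrArg _ (Prod.ext rfl (le_antisymm h1.2 h2.2)))

/-!
Points `(φ, 1)` and `(i, ∞)` are maximal. For the others, a directed set `d` either meets
`F × {0,1}`, in which case its supremum is some `(ψ, b)` and `x ≤ (ψ, b)` already gives
`x ≤ (ψ, 0) ≤` the point of `d` in `F × {0,1}`; or `d` lies in one column `{i} × ℕ∞`, where
it is a directed set of extended naturals and a finite `(i, K)` is compact as `K` is in `ℕ∞`.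
-/

lemma ENat.exists_natCast_le_of_isLUB {s : Set ℕ∞} {n : ℕ∞} (hs : s.Nonempty) (hn : IsLUB s n)
    {K : ℕ} (hK : (K : ℕ∞) ≤ n) : ∃ m ∈ s, (K : ℕ∞) ≤ m := by
  cases K with
  | zero => exact hs.imp fun m hm => ⟨hm, by simp⟩
  | succ k =>
    have hk : (k : ℕ∞) < n := (ENat.natCast_lt_natCast.mpr k.lt_succ_self).trans_le hK
    obtain ⟨m, hm, hkm⟩ := (lt_isLUB_iff hn).mp hk
    exact ⟨m, hm, by simpa using Order.add_one_le_of_lt hkm⟩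

namespace LCarrier

@[simp]
lemma inl_le_inl {i j : ℕ} {m n : ℕ∞} :
    (⟨.inl (i, m)⟩ : LCarrier) ≤ ⟨.inl (j, n)⟩ ↔ i = j ∧ m ≤ n := Iff.rfl

@[simp]
lemma inl_le_inr {i : ℕ} {m : ℕ∞} {φ : ℕ → ℕ} {b : Bool} :
    (⟨.inl (i, m)⟩ : LCarrier) ≤ ⟨.inr (φ, b)⟩ ↔ m ≤ φ i := Iff.rfl

@[simp]
lemma inr_le_inr {φ ψ : ℕ → ℕ} {b c : Bool} :
    (⟨.inr (φ, b)⟩ : LCarrier) ≤ ⟨.inr (ψ, c)⟩ ↔ φ = ψ ∧ b ≤ c := Iff.rfl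

@[simp]
lemma not_inr_le_inl {φ : ℕ → ℕ} {b : Bool} {i : ℕ} {m : ℕ∞} :
    ¬ (⟨.inr (φ, b)⟩ : LCarrier) ≤ ⟨.inl (i, m)⟩ := id

noncomputable def col (i : ℕ) : ℕ∞ ↪o LCarrier :=
  OrderEmbedding.ofMapLEIff (fun n => ⟨.inl (i, n)⟩) fun _ _ => by simp

@[simp]
lemma col_apply (i : ℕ) (n : ℕ∞) : col i n = ⟨.inl (i, n)⟩ := rfl

lemma le_col_top_iff {x : LCarrier} {i : ℕ} : x ≤ col i ⊤ ↔ x ∈ Set.range (col i) := by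
  refine ⟨fun h => ?_, by rintro ⟨n, rfl⟩; exact (col i).monotone le_top⟩
  rcases x with ⟨⟨j, n⟩ | ⟨φ, b⟩⟩
  · obtain ⟨rfl, -⟩ := inl_le_inl.mp h
    exact ⟨n, rfl⟩
  · exact absurd h not_inr_le_inl

lemma isMax_col_top (i : ℕ) : IsMax (col i ⊤) := by
  rintro ⟨⟨j, n⟩ | ⟨ψ, c⟩⟩ hy
  · obtain ⟨rfl, -⟩ := inl_le_inl.mp hy
    exact inl_le_inl.mpr ⟨rfl, le_top⟩
  · exact absurd (top_le_iff.mp (inl_le_inr.mp hy)) (ENat.natCast_ne_top _)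

lemma isMax_inr_true (φ : ℕ → ℕ) : IsMax (⟨.inr (φ, true)⟩ : LCarrier) := by
  rintro ⟨⟨j, n⟩ | ⟨ψ, c⟩⟩ hy
  · exact absurd hy not_inr_le_inl
  · obtain ⟨rfl, -⟩ := inr_le_inr.mp hy
    exact inr_le_inr.mpr ⟨rfl, Bool.le_true c⟩

lemma exists_eq_inr_of_inr_le {ψ : ℕ → ℕ} {c : Bool} {a : LCarrier}
    (h : ⟨.inr (ψ, c)⟩ ≤ a) : ∃ e, a = ⟨.inr (ψ, e)⟩ := by
  rcases a with ⟨⟨j, n⟩ | ⟨χ, e⟩⟩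
  · exact absurd h not_inr_le_inl
  · obtain ⟨rfl, -⟩ := inr_le_inr.mp h
    exact ⟨e, rfl⟩

/-- Two elements of `E` have an upper bound in `E` only if they lie in the same column. -/
lemma exists_subset_range_col {d : Set LCarrier} (hne : d.Nonempty)
    (hdir : DirectedOn (· ≤ ·) d) (hE : ∀ ψ c, (⟨.inr (ψ, c)⟩ : LCarrier) ∉ d) :
    ∃ i, d ⊆ Set.range (col i) := by
  obtain ⟨⟨⟨i, n⟩ | ⟨ψ, c⟩⟩, hy₀⟩ := hne
  · refine ⟨i, fun y hy => le_col_top_iff.mp ?_⟩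
    obtain ⟨⟨⟨j, p⟩ | ⟨ψ, c⟩⟩, hw, hyw, hy₀w⟩ := hdir y hy _ hy₀
    · obtain ⟨rfl, -⟩ := inl_le_inl.mp hy₀w
      exact hyw.trans ((col i).monotone le_top)
    · exact absurd hw (hE ψ c)
  · exact absurd hy₀ (hE ψ c)

lemma exists_eq_col_isLUB_preimage {d : Set LCarrier} {a : LCarrier} {i : ℕ}
    (hi : d ⊆ Set.range (col i)) (ha : IsLUB d a) : ∃ n, a = col i n ∧ IsLUB (col i ⁻¹' d) n := by
  have hub : col i ⊤ ∈ upperBounds d := fun y hy => le_col_top_iff.mpr (hi hy)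
  obtain ⟨n, rfl⟩ := le_col_top_iff.mp (ha.2 hub)
  refine ⟨n, rfl, fun m hm => (col i).le_iff_le.mp (ha.1 hm), fun u hu => ?_⟩
  refine (col i).le_iff_le.mp (ha.2 fun y hy => ?_)
  obtain ⟨m, rfl⟩ := hi hy
  exact (col i).le_iff_le.mpr (hu hy)

lemma isCompactElt_of_forall {x : LCarrier}
    (hF : ∀ ψ e, x ≤ ⟨.inr (ψ, e)⟩ → x ≤ ⟨.inr (ψ, false)⟩)
    (hE : ∀ i (s : Set ℕ∞) n, s.Nonempty → IsLUB s n → x ≤ col i n → ∃ m ∈ s, x ≤ col i m) :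
    IsCompactElt x := by
  intro d hne hdir a ha hxa
  by_cases hF' : ∃ ψ c, (⟨.inr (ψ, c)⟩ : LCarrier) ∈ d
  · obtain ⟨ψ, c, hψc⟩ := hF'
    obtain ⟨e, rfl⟩ := exists_eq_inr_of_inr_le (ha.1 hψc)
    exact ⟨_, hψc, (hF ψ e hxa).trans (inr_le_inr.mpr ⟨rfl, Bool.false_le c⟩)⟩
  · push Not at hF'
    obtain ⟨i, hi⟩ := exists_subset_range_col hne hdir hF'
    obtain ⟨n, rfl, hn⟩ := exists_eq_col_isLUB_preimage hi ha
    obtain ⟨m, hm, hxm⟩ := hE i _ n (hne.preimage' hi) hn hxa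
    exact ⟨_, hm, hxm⟩

end LCarrier

open LCarrier in
/-- Every element of `L` is either compact (way-below itself) or maximal. -/
theorem L_compact_or_maximal : ∀ x : LCarrier, IsCompactElt x ∨ IsMax x := by
  rintro ⟨⟨i, m⟩ | ⟨φ, b⟩⟩
  · induction m using ENat.recTopCoe with
    | top => exact .inr (isMax_col_top i)
    | coe K =>
      refine .inl (isCompactElt_of_forall (fun ψ e h => by simpa using h) ?_)
      rintro j s n hs hn ⟨rfl, hK⟩
      simpa using ENat.exists_natCast_le_of_isLUB hs hn hK
  · cases b with
    | true => exact .inr (isMax_inr_true φ)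
    | false =>
      refine .inl (isCompactElt_of_forall (fun ψ e h => by simpa using h) ?_)
      simp
end

section
/- Let P be a dcpo, X and Y topological spaces, and suppose Max(P) with the relative Scott topology is homeomorphic to X × Y via a homeomorphism identifying Max(P) = X × Y. If P is an ideal domain, then for each y ∈ Y, the set ↓(X × {y}) is a Scott-closed subset of P and is a domain whose maximal point space is homeomorphic to X. -/
/-!
In an ideal domain an element way below another is compact, so the sets `Ici k`, `k` compact,
are Scott open; they separate maximal points, so `Max P ≅ X × Y` is T1 and the slice
`F = X × {y}` is closed in `Max P`. The lower closure of a closed set `F` of maximal points is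
Scott closed: a directed supremum is either compact, hence below a member of the directed set,
or maximal, and then it cannot lie in the open complement of `F`. A Scott-closed subset of a
continuous dcpo is a continuous dcpo with the same directed suprema, and in an ideal domain its
Scott topology is the relative one, so the maximal points of `↓F` form the subspace `F ≅ X`.
-/

open Topology

section Preorder

variable {α : Type*} [Preorder α]

theorem WayBelow.le {x y : α} (h : WayBelow x y) : x ≤ y := by
  obtain ⟨z, rfl, hxz⟩ := h {y} (Set.singleton_nonempty y) (directedOn_singleton y)
    y isLUB_singleton le_rfl
  exact hxz

theorem WayBelow.mono {x' x y y' : α} (hx : x' ≤ x) (h : WayBelow x y) (hy : y ≤ y') :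
    WayBelow x' y' := fun d hne hdir a ha hle =>
  (h d hne hdir a ha (hy.trans hle)).imp fun _ hz => ⟨hz.1, hx.trans hz.2⟩

theorem IsCompactElt.scottOpen_Ici {k : α} (hk : IsCompactElt k) : ScottOpen (Set.Ici k) :=
  ⟨fun _ _ hab ha => ha.trans hab, fun d hne hdir a ha hka => hk d hne hdir a ha hka⟩

theorem isCompactElt_of_wayBelow (h : ∀ x : α, IsCompactElt x ∨ IsMax x) {z x : α}
    (hzx : WayBelow z x) : IsCompactElt z :=
  (h z).elim id fun hz => hzx.mono le_rfl (hz hzx.le)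

theorem nonempty_wayBelow_of_isLUB {x : α} (h : IsLUB {z | WayBelow z x} x) :
    {z | WayBelow z x}.Nonempty := by
  by_contra hempty
  rw [Set.not_nonempty_iff_eq_empty] at hempty
  have hbot : IsBot x := fun b => h.2 (by simp [hempty])
  have hx : WayBelow x x := fun d hne _ _ _ _ => hne.imp fun z hz => ⟨hz, hbot z⟩
  exact hempty.subset hx

end Preorder

namespace ScottClosed

variable {P : Type*} [Preorder P] {C : Set P}

theorem directedOn_image_val {d : Set C} (hdir : DirectedOn (· ≤ ·) d) :
    DirectedOn (· ≤ ·) (Subtype.val '' d) := by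
  rintro _ ⟨u, hu, rfl⟩ _ ⟨v, hv, rfl⟩
  obtain ⟨w, hw, huw, hvw⟩ := hdir u hu v hv
  exact ⟨w, ⟨w, hw, rfl⟩, huw, hvw⟩

theorem exists_isLUB_image_val (hC : ScottClosed C) (hP : IsDcpo P) {d : Set C}
    (hne : d.Nonempty) (hdir : DirectedOn (· ≤ ·) d) :
    ∃ a ∈ C, IsLUB (Subtype.val '' d) a := by
  obtain ⟨a, ha⟩ := hP _ (hne.image _) (directedOn_image_val hdir)
  exact ⟨a, hC.2 _ (by rintro _ ⟨u, -, rfl⟩; exact u.2) (hne.image _)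
    (directedOn_image_val hdir) a ha, ha⟩

theorem isDcpo (hC : ScottClosed C) (hP : IsDcpo P) : IsDcpo C := fun d hne hdir => by
  obtain ⟨a, haC, ha⟩ := hC.exists_isLUB_image_val hP hne hdir
  exact ⟨⟨a, haC⟩, .of_image Subtype.coe_le_coe ha⟩

theorem isLUB_image_val (hC : ScottClosed C) (hP : IsDcpo P) {d : Set C} (hne : d.Nonempty)
    (hdir : DirectedOn (· ≤ ·) d) {b : C} (hb : IsLUB d b) :
    IsLUB (Subtype.val '' d) b.val := by
  obtain ⟨a, haC, ha⟩ := hC.exists_isLUB_image_val hP hne hdir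
  have hba : b ≤ ⟨a, haC⟩ := hb.2 fun u hu => ha.1 ⟨u, hu, rfl⟩
  exact ⟨fun _ ⟨u, hu, hub⟩ => hub ▸ hb.1 hu,
    fun c hc => (show b.val ≤ a from hba).trans (ha.2 hc)⟩

theorem wayBelow_mk (hC : ScottClosed C) (hP : IsDcpo P) {z x : P} (hz : z ∈ C)
    (hx : x ∈ C) (h : WayBelow z x) : WayBelow (⟨z, hz⟩ : C) ⟨x, hx⟩ := by
  intro d hne hdir b hb hxb
  obtain ⟨_, ⟨w, hw, rfl⟩, hzw⟩ := h _ (hne.image _) (directedOn_image_val hdir) b.val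
    (hC.isLUB_image_val hP hne hdir hb) hxb
  exact ⟨w, hw, hzw⟩

theorem scottOpen_preimage_val (hC : ScottClosed C) (hP : IsDcpo P) {U : Set P}
    (hU : ScottOpen U) : ScottOpen (Subtype.val ⁻¹' U : Set C) := by
  refine ⟨fun _ _ hab ha => hU.1 hab ha, fun d hne hdir b hb hbU => ?_⟩
  obtain ⟨_, ⟨w, hw, rfl⟩, hwU⟩ := hU.2 _ (hne.image _) (directedOn_image_val hdir) b.val
    (hC.isLUB_image_val hP hne hdir hb) hbU
  exact ⟨w, hw, hwU⟩

theorem continuous_val (hC : ScottClosed C) (hP : IsDcpo P) :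
    Continuous[scottTop C, scottTop P] (Subtype.val : C → P) :=
  continuous_def.2 fun _ hU => hC.scottOpen_preimage_val hP hU

theorem approximants_wayBelow_val (hC : ScottClosed C) (hP : IsContinuousDcpo P) (x : C) :
    {z : C | WayBelow z.val x.val}.Nonempty ∧ DirectedOn (· ≤ ·) {z : C | WayBelow z.val x.val} ∧
      IsLUB {z : C | WayBelow z.val x.val} x := by
  obtain ⟨hdir, hlub⟩ := hP.2 x.val
  have hmem : ∀ {z : P}, WayBelow z x.val → z ∈ C := fun hz => hC.1 hz.le x.2
  refine ⟨?_, ?_, fun z (hz : WayBelow z.val x.val) => hz.le, fun b hb => ?_⟩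
  · obtain ⟨z, hz⟩ := nonempty_wayBelow_of_isLUB hlub
    exact ⟨⟨z, hmem hz⟩, hz⟩
  · intro u hu v hv
    obtain ⟨w, hw, huw, hvw⟩ := hdir u.val hu v.val hv
    exact ⟨⟨w, hmem hw⟩, hw, huw, hvw⟩
  · exact hlub.2 fun z hz => hb (show ⟨z, hmem hz⟩ ∈ {z : C | WayBelow z.val x.val} from hz)

theorem isContinuousDcpo (hC : ScottClosed C) (hP : IsContinuousDcpo P) :
    IsContinuousDcpo C := by
  refine ⟨hC.isDcpo hP.1, fun x => ?_⟩
  obtain ⟨hne, hdir, hlub⟩ := hC.approximants_wayBelow_val hP x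
  have hsub : {z : C | WayBelow z.val x.val} ⊆ {z : C | WayBelow z x} := fun z hz =>
    hC.wayBelow_mk hP.1 z.2 x.2 hz
  refine ⟨fun u hu v hv => ?_, fun z hz => WayBelow.le hz,
    fun b hb => hlub.2 (upperBounds_mono_set hsub hb)⟩
  obtain ⟨zu, hzu, huzu⟩ := hu _ hne hdir x hlub le_rfl
  obtain ⟨zv, hzv, hvzv⟩ := hv _ hne hdir x hlub le_rfl
  obtain ⟨w, hw, hzuw, hzvw⟩ := hdir zu hzu zv hzv
  exact ⟨w, hsub hw, huzu.trans hzuw, hvzv.trans hzvw⟩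

/-- A Scott-open `U ⊆ C` is the trace on `C` of the union of the `Ici k` over compact `k ∈ U`. -/
theorem scottTop_eq_induced (hP : IsIdealDomain P) (hC : ScottClosed C) :
    scottTop C = (scottTop P).induced Subtype.val := by
  refine le_antisymm (continuous_iff_le_induced.1 (hC.continuous_val hP.1.1)) fun U hU => ?_
  have hU : ScottOpen U := hU
  refine ⟨{p | ∃ z ∈ U, IsCompactElt z.val ∧ z.val ≤ p}, ⟨?_, ?_⟩, Set.ext fun x => ⟨?_, ?_⟩⟩
  · rintro a b hab ⟨z, hzU, hz, hza⟩
    exact ⟨z, hzU, hz, hza.trans hab⟩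
  · rintro d hne hdir a ha ⟨z, hzU, hz, hza⟩
    obtain ⟨p, hpd, hzp⟩ := hz d hne hdir a ha hza
    exact ⟨p, hpd, z, hzU, hz, hzp⟩
  · rintro ⟨z, hzU, -, hzx⟩
    exact hU.1 hzx hzU
  · intro hx
    obtain ⟨hne, hdir, hlub⟩ := hC.approximants_wayBelow_val hP.1 x
    obtain ⟨z, hz, hzU⟩ := hU.2 _ hne hdir x hlub hx
    exact ⟨z, hzU, isCompactElt_of_wayBelow hP.2 hz, hz.le⟩

end ScottClosed

theorem t1Space_maxSpace {P : Type*} [PartialOrder P] (hP : IsIdealDomain P) :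
    T1Space (MaxSpace P) := by
  refine t1Space_iff_exists_open.2 fun m m' hne => ?_
  obtain ⟨z, hzm, hzm'⟩ : ∃ z, WayBelow z m.val ∧ ¬ z ≤ m'.val := by
    by_contra! h
    have hle : m.val ≤ m'.val := (hP.1.2 m.val).2.2 h
    exact hne (Subtype.ext (le_antisymm hle (m.2 hle)))
  exact ⟨Subtype.val ⁻¹' Set.Ici z, ⟨_, (isCompactElt_of_wayBelow hP.2 hzm).scottOpen_Ici, rfl⟩,
    hzm.le, hzm'⟩

/-- `↓F` for a set `F` of maximal points. -/
def maxLowerClosure {P : Type*} [Preorder P] (F : Set (MaxSpace P)) : Set P :=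
  {p | ∃ m ∈ F, p ≤ m.val}

namespace maxLowerClosure

variable {P : Type*}

theorem scottClosed [Preorder P] (h : ∀ x : P, IsCompactElt x ∨ IsMax x)
    {F : Set (MaxSpace P)} (hF : IsClosed F) : ScottClosed (maxLowerClosure F) := by
  refine ⟨fun a b hba ⟨m, hm, ham⟩ => ⟨m, hm, hba.trans ham⟩, fun d hdC hne hdir a ha => ?_⟩
  rcases h a with ha_compact | ha_max
  · obtain ⟨p, hpd, hap⟩ := ha_compact d hne hdir a ha le_rfl
    obtain ⟨m, hm, hpm⟩ := hdC hpd
    exact ⟨m, hm, hap.trans hpm⟩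
  · refine ⟨⟨a, ha_max⟩, ?_, le_rfl⟩
    by_contra haF
    obtain ⟨U, hU, hUF⟩ := hF.isOpen_compl
    have hU : ScottOpen U := hU
    have haU : ⟨a, ha_max⟩ ∈ Subtype.val ⁻¹' U := hUF ▸ haF
    obtain ⟨p, hpd, hpU⟩ := hU.2 d hne hdir a ha haU
    obtain ⟨m, hm, hpm⟩ := hdC hpd
    have hmF : m ∈ Fᶜ := hUF ▸ hU.1 hpm hpU
    exact hmF hm

theorem isMax_val_of_isMax [Preorder P] {F : Set (MaxSpace P)} {c : maxLowerClosure F}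
    (hc : IsMax c) : IsMax c.val := by
  obtain ⟨m, hm, hcm⟩ := c.2
  exact m.2.mono (hc (show c ≤ ⟨m.val, m, hm, le_rfl⟩ from hcm))

theorem mem_of_isMax [PartialOrder P] {F : Set (MaxSpace P)} {c : maxLowerClosure F}
    (hc : IsMax c) : (⟨c.val, isMax_val_of_isMax hc⟩ : MaxSpace P) ∈ F := by
  obtain ⟨m, hm, hcm⟩ := c.2
  rwa [show (⟨c.val, _⟩ : MaxSpace P) = m from
    Subtype.ext (le_antisymm hcm (isMax_val_of_isMax hc hcm))]

def maxSpaceHomeomorph [PartialOrder P] (hP : IsIdealDomain P)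
    {F : Set (MaxSpace P)} (hC : ScottClosed (maxLowerClosure F)) :
    MaxSpace (maxLowerClosure F) ≃ₜ F where
  toFun c := ⟨⟨c.1.1, isMax_val_of_isMax c.2⟩, mem_of_isMax c.2⟩
  invFun m := ⟨⟨m.1.1, m, m.2, le_rfl⟩, fun _ h => m.1.2 h⟩
  left_inv _ := rfl
  right_inv _ := rfl
  continuous_toFun := by
    refine (continuous_induced_rng.2 ?_).subtype_mk _
    change Continuous[_, scottTop P] fun c : MaxSpace (maxLowerClosure F) => c.1.1
    exact @Continuous.comp _ (maxLowerClosure F) _ _ (scottTop _) (scottTop P) _ _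
      (hC.continuous_val hP.1.1) continuous_induced_dom
  continuous_invFun := by
    refine continuous_induced_rng.2 ?_
    rw [hC.scottTop_eq_induced hP]
    refine continuous_induced_rng.2 ?_
    change Continuous[_, scottTop P] fun m : F => m.1.1
    exact @Continuous.comp F (MaxSpace P) P _ _ (scottTop P) _ _
      continuous_induced_dom continuous_subtype_val

end maxLowerClosure

def Homeomorph.sndFiber {Z X Y : Type*} [TopologicalSpace Z] [TopologicalSpace X]
    [TopologicalSpace Y] (e : Z ≃ₜ X × Y) (y : Y) : {z : Z // (e z).2 = y} ≃ₜ X where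
  toFun z := (e z).1
  invFun x := ⟨e.symm (x, y), by simp⟩
  left_inv z := Subtype.ext (by simp [← z.2])
  right_inv x := by simp
  continuous_toFun := continuous_fst.comp (e.continuous.comp continuous_subtype_val)
  continuous_invFun :=
    (e.symm.continuous.comp (continuous_id.prodMk continuous_const)).subtype_mk _

theorem isClosed_setOf_snd_eq {X Y : Type*} [TopologicalSpace X] [TopologicalSpace Y]
    [T1Space (X × Y)] (y : Y) : IsClosed {z : X × Y | z.2 = y} := by
  cases isEmpty_or_nonempty X with
  | inl _ => exact Set.Subsingleton.isClosed fun a => isEmptyElim a.1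
  | inr hX =>
    have : T1Space Y := (isEmbedding_prodMkRight hX.some).t1Space
    exact isClosed_singleton.preimage continuous_snd

/-- If `P` is an ideal domain whose maximal point space is identified with
`X × Y` via a homeomorphism `e`, then for each `y ∈ Y` the set `↓(X × {y})` is Scott
closed in `P`, is a domain, and its maximal point space is homeomorphic to `X`. -/
theorem slice_domain_model {P X Y : Type*} [PartialOrder P]
    [TopologicalSpace X] [TopologicalSpace Y]
    (hP : IsIdealDomain P) (e : MaxSpace P ≃ₜ X × Y) (y : Y) :
    ScottClosed {p : P | ∃ m : MaxSpace P, (e m).2 = y ∧ p ≤ m.val} ∧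
    IsContinuousDcpo {p : P | ∃ m : MaxSpace P, (e m).2 = y ∧ p ≤ m.val} ∧
    Nonempty (MaxSpace {p : P | ∃ m : MaxSpace P, (e m).2 = y ∧ p ≤ m.val} ≃ₜ X) := by
  have := t1Space_maxSpace hP
  have : T1Space (X × Y) := e.symm.isEmbedding.t1Space
  have hF : IsClosed {m : MaxSpace P | (e m).2 = y} :=
    (isClosed_setOf_snd_eq y).preimage e.continuous
  have hC := maxLowerClosure.scottClosed hP.2 hF
  exact ⟨hC, hC.isContinuousDcpo hP.1,
    ⟨(maxLowerClosure.maxSpaceHomeomorph hP hC).trans (e.sndFiber y)⟩⟩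
end
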